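/- Let α > 1 and suppose |R(y)| ≤ C|y|_p^M for all |y|_p ≤ 1, where M > 0. Then for 0 < |x|_p ≤ 1, |∫_{|y|_p ≤ |x|_p} (|x − y|_p^(α−1) − |y|_p^(α−1)) R(y) dy| ≤ C' |x|_p^(α+M) for some constant C' depending only on p, α, M. -/

import Mathlib

open MeasureTheory Real Filter

noncomputable instance padicMeasurableSpace (p : ℕ) [Fact p.Prime] : MeasurableSpace ℚ_[p] := borel _
instance padicBorelSpace (p : ℕ) [Fact p.Prime] : BorelSpace ℚ_[p] := ⟨rfl⟩

/-- The Haar measure on `ℚ_[p]` normalized so that the unit ball has measure 1. -/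
noncomputable def padicHaar (p : ℕ) [Fact p.Prime] : Measure ℚ_[p] :=
  Measure.addHaarMeasure
    ⟨⟨Metric.closedBall 0 1, isCompact_closedBall 0 1⟩,
      ⟨0, Metric.ball_subset_interior_closedBall (Metric.mem_ball_self one_pos)⟩⟩

/-! On the ball `‖y‖ ≤ ‖x‖` the ultrametric inequality gives `‖x - y‖ ≤ ‖x‖`, so the integrand is
bounded by `‖x‖ ^ (α - 1) * C * ‖x‖ ^ M`. The ball has Haar measure `‖x‖ = p ^ (-n)`, because
the unit ball is the disjoint union of the `p ^ n` translates `k + B(0, p ^ (-n))`,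
`0 ≤ k < p ^ n`. -/

open scoped ENNReal
open Metric

lemma IsUltrametricDist.abs_rpow_norm_sub_sub_rpow_norm_le {E : Type*}
    [SeminormedAddCommGroup E] [IsUltrametricDist E] {x y : E} (hy : ‖y‖ ≤ ‖x‖) {a : ℝ}
    (ha : 0 ≤ a) : |‖x - y‖ ^ a - ‖y‖ ^ a| ≤ ‖x‖ ^ a := by
  have hxy : ‖x - y‖ ≤ ‖x‖ := by
    simpa [dist_eq_norm] using (dist_triangle_max x 0 y).trans (by simpa using hy)
  exact abs_sub_le_of_nonneg_of_le (by positivity) (by gcongr) (by positivity) (by gcongr)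

namespace Padic

variable {p : ℕ} [Fact p.Prime]

lemma exists_lt_pow_norm_sub_natCast_le {y : ℚ_[p]} (hy : ‖y‖ ≤ 1) (n : ℕ) :
    ∃ k < p ^ n, ‖y - k‖ ≤ (p : ℝ) ^ (-n : ℤ) := by
  set z : ℤ_[p] := ⟨y, hy⟩
  obtain ⟨c, hc⟩ := Ideal.mem_span_singleton'.mp (PadicInt.appr_spec n z)
  refine ⟨z.appr n, z.appr_lt n, ?_⟩
  have hyc : y - z.appr n = ((c * (p : ℤ_[p]) ^ n : ℤ_[p]) : ℚ_[p]) := by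
    rw [hc]; push_cast; rfl
  rw [hyc, ← PadicInt.norm_def, norm_mul, PadicInt.norm_p_pow]
  exact mul_le_of_le_one_left (by positivity) c.norm_le_one

lemma zpow_neg_lt_norm_natCast_sub_natCast {n j k : ℕ} (hj : j < p ^ n) (hk : k < p ^ n)
    (hjk : j ≠ k) : (p : ℝ) ^ (-n : ℤ) < ‖(j : ℚ_[p]) - k‖ := by
  by_contra! h
  have hdvd : ((p ^ n : ℕ) : ℤ) ∣ (j : ℤ) - k := by
    exact_mod_cast (norm_int_le_pow_iff_dvd ((j : ℤ) - k) n).mp (by push_cast; exact h)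
  have := Int.eq_zero_of_abs_lt_dvd hdvd (by rw [abs_lt]; omega)
  omega

lemma closedBall_one_eq_biUnion (n : ℕ) :
    closedBall (0 : ℚ_[p]) 1 =
      ⋃ k ∈ Finset.range (p ^ n), closedBall (k : ℚ_[p]) ((p : ℝ) ^ (-n : ℤ)) := by
  refine subset_antisymm (fun y hy => ?_) (Set.iUnion₂_subset fun k _ => ?_)
  · obtain ⟨k, hk, hyk⟩ := exists_lt_pow_norm_sub_natCast_le (mem_closedBall_zero_iff.mp hy) n
    exact Set.mem_biUnion (Finset.mem_range.mpr hk) (mem_closedBall_iff_norm.mpr hyk)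
  · have hk : (k : ℚ_[p]) ∈ closedBall 0 1 :=
      mem_closedBall_zero_iff.mpr (by simpa using norm_int_le_one (p := p) k)
    rw [IsUltrametricDist.closedBall_eq_of_mem hk]
    exact closedBall_subset_closedBall
      (zpow_le_one_of_nonpos₀ (mod_cast (Fact.out : p.Prime).one_le) (by omega))

lemma pairwiseDisjoint_closedBall_natCast (n : ℕ) :
    (Finset.range (p ^ n) : Set ℕ).PairwiseDisjoint
      fun k => closedBall (k : ℚ_[p]) ((p : ℝ) ^ (-n : ℤ)) := by
  intro j hj k hk hjk
  refine (IsUltrametricDist.closedBall_eq_or_disjoint _ _ _).resolve_left fun h => ?_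
  have hkj : (k : ℚ_[p]) ∈ closedBall (j : ℚ_[p]) ((p : ℝ) ^ (-n : ℤ)) :=
    h ▸ mem_closedBall_self (by positivity)
  exact (zpow_neg_lt_norm_natCast_sub_natCast (by simpa using hk) (by simpa using hj)
    hjk.symm).not_ge (mem_closedBall_iff_norm.mp hkj)

lemma measure_closedBall_one_eq_pow_mul (μ : Measure ℚ_[p]) [μ.IsAddHaarMeasure] (n : ℕ) :
    μ (closedBall 0 1) = p ^ n * μ (closedBall 0 ((p : ℝ) ^ (-n : ℤ))) := by
  rw [closedBall_one_eq_biUnion n, measure_biUnion_finset (pairwiseDisjoint_closedBall_natCast n)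
    fun _ _ => measurableSet_closedBall]
  simp [Measure.addHaar_closedBall_center]

end Padic

section padicHaar

variable {p : ℕ} [Fact p.Prime]

instance : (padicHaar p).IsAddHaarMeasure := Measure.isAddHaarMeasure_addHaarMeasure _

lemma padicHaar_closedBall_one : padicHaar p (closedBall 0 1) = 1 :=
  Measure.addHaarMeasure_self

lemma padicHaar_real_closedBall_zpow (n : ℕ) :
    (padicHaar p).real (closedBall 0 ((p : ℝ) ^ (-n : ℤ))) = (p : ℝ) ^ (-n : ℤ) := by
  have hm : padicHaar p (closedBall 0 ((p : ℝ) ^ (-n : ℤ))) = ((p : ℝ≥0∞) ^ n)⁻¹ :=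
    ENNReal.eq_inv_of_mul_eq_one_left <| by
      rw [mul_comm, ← Padic.measure_closedBall_one_eq_pow_mul, padicHaar_closedBall_one]
  rw [measureReal_def, hm]
  simp

lemma padicHaar_real_closedBall_norm {x : ℚ_[p]} (hx : x ≠ 0) (hx1 : ‖x‖ ≤ 1) :
    (padicHaar p).real (closedBall 0 ‖x‖) = ‖x‖ := by
  have hv : x.valuation = x.valuation.toNat := by
    have := (Padic.norm_le_one_iff_val_nonneg x).mp hx1
    omega
  rw [Padic.norm_eq_zpow_neg_valuation hx, hv]
  exact padicHaar_real_closedBall_zpow _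

end padicHaar

theorem remainder_bound (p : ℕ) [Fact p.Prime] (α M C : ℝ) (hα : 1 < α) (hM : 0 < M)
    (R : ℚ_[p] → ℝ) (hR : ∀ y : ℚ_[p], ‖y‖ ≤ 1 → |R y| ≤ C * ‖y‖ ^ M) :
    ∃ C' : ℝ, ∀ x : ℚ_[p], 0 < ‖x‖ → ‖x‖ ≤ 1 →
      |∫ y in {y : ℚ_[p] | ‖y‖ ≤ ‖x‖},
          (‖x - y‖ ^ (α - 1) - ‖y‖ ^ (α - 1)) * R y ∂(padicHaar p)|
        ≤ C' * ‖x‖ ^ (α + M) := by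
  have hC : 0 ≤ C := by simpa using (abs_nonneg _).trans (hR 1 (by simp))
  refine ⟨C, fun x hx hx1 => ?_⟩
  have hball : {y : ℚ_[p] | ‖y‖ ≤ ‖x‖} = closedBall 0 ‖x‖ := by ext; simp
  have hbound : ∀ y ∈ closedBall (0 : ℚ_[p]) ‖x‖,
      ‖(‖x - y‖ ^ (α - 1) - ‖y‖ ^ (α - 1)) * R y‖ ≤ ‖x‖ ^ (α - 1) * (C * ‖x‖ ^ M) := by
    intro y hy
    rw [mem_closedBall_zero_iff] at hy
    rw [norm_mul]
    exact mul_le_mul (IsUltrametricDist.abs_rpow_norm_sub_sub_rpow_norm_le hy (by linarith))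
      ((hR y (hy.trans hx1)).trans (by gcongr)) (norm_nonneg _) (by positivity)
  calc _ ≤ ‖x‖ ^ (α - 1) * (C * ‖x‖ ^ M) * (padicHaar p).real (closedBall 0 ‖x‖) := by
        rw [hball, ← Real.norm_eq_abs]
        exact norm_setIntegral_le_of_norm_le_const (isCompact_closedBall _ _).measure_lt_top hbound
    _ = C * ‖x‖ ^ (α + M) := by
        rw [padicHaar_real_closedBall_norm (norm_pos_iff.mp hx) hx1, Real.rpow_add hx,
          Real.rpow_sub_one hx.ne']
        field_simp
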